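/- arXiv:1904.10766 — 3 statements merged into one kernel-verified Lean document; each statement's English description precedes it below -/
import Mathlib

section
/- Let p be a complex polynomial of degree n, c ≠ 0, and suppose p has a zero of multiplicity m at the point x = a/c. Then the Möbius-transformed polynomial q(x) = (cx+d)^n p((ax+b)/(cx+d)) (with ad - bc ≠ 0) has degree n - m. -/
/-!
The polynomial `q` is the degree-`n` homogenization of `p`, evaluated at `(a X + b, c X + d)`.
Homogenization is multiplicative, so writing `p = (X - a/c)^m * r` with `r(a/c) ≠ 0` splits `q`
into the image of `X - a/c`, which is the nonzero constant `(b c - a d)/c` raised to the `m`-th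
power, times the image `q_r` of `r`, homogenized in degree `n - m`. The coefficient of
`X^(n-m)` in `q_r` is the homogenization of `r` evaluated at the leading coefficients `(a, c)`,
that is `c^(n-m) r(a/c) ≠ 0`.
-/

open Polynomial

namespace Polynomial

section Semiring

variable {R : Type*} [Semiring R] {A D : R[X]}

theorem natDegree_pow_mul_pow_le (hA : A.natDegree ≤ 1) (hD : D.natDegree ≤ 1) (k l : ℕ) :
    (A ^ k * D ^ l).natDegree ≤ k + l := by
  refine natDegree_mul_le.trans (add_le_add ?_ ?_)
  · simpa using natDegree_pow_le_of_le k hA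
  · simpa using natDegree_pow_le_of_le l hD

theorem coeff_pow_mul_pow (hA : A.natDegree ≤ 1) (hD : D.natDegree ≤ 1) (k l : ℕ) :
    (A ^ k * D ^ l).coeff (k + l) = A.coeff 1 ^ k * D.coeff 1 ^ l := by
  rw [coeff_mul_add_eq_of_natDegree_le (by simpa using natDegree_pow_le_of_le k hA)
      (by simpa using natDegree_pow_le_of_le l hD)]
  simpa using congrArg₂ (· * ·) (coeff_pow_of_natDegree_le (m := k) hA)
    (coeff_pow_of_natDegree_le (m := l) hD)

end Semiring

section CommSemiring

variable {R : Type*} [CommSemiring R]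

theorem aeval_homogenize_eq_sum {S : Type*} [CommSemiring S] [Algebra R S] (p : R[X]) (n : ℕ)
    (x y : S) :
    MvPolynomial.aeval ![x, y] (p.homogenize n) =
      ∑ k ∈ Finset.range (n + 1), algebraMap R S (p.coeff k) * x ^ k * y ^ (n - k) := by
  simp only [homogenize, Finset.Nat.sum_antidiagonal_eq_sum_range_succ_mk, map_sum,
    MvPolynomial.aeval_monomial]
  refine Finset.sum_congr rfl fun k _ ↦ ?_
  rw [Finsupp.prod_fintype _ _ (by simp)]
  simp [Fin.prod_univ_two, mul_assoc]

theorem homogenize_pow (p : R[X]) {n : ℕ} (hp : p.natDegree ≤ n) (k : ℕ) :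
    (p ^ k).homogenize (k * n) = p.homogenize n ^ k := by
  simpa using homogenize_finsetProd (s := Finset.range k) (p := fun _ ↦ p) (n := fun _ ↦ n)
    (fun _ _ ↦ hp)

variable {A D : R[X]}

theorem natDegree_aeval_homogenize_le (hA : A.natDegree ≤ 1) (hD : D.natDegree ≤ 1)
    (p : R[X]) (n : ℕ) : (MvPolynomial.aeval ![A, D] (p.homogenize n)).natDegree ≤ n := by
  rw [aeval_homogenize_eq_sum]
  refine natDegree_sum_le_of_forall_le _ _ fun k hk ↦ ?_
  obtain ⟨l, rfl⟩ := Nat.exists_eq_add_of_le (Nat.lt_succ_iff.mp (Finset.mem_range.mp hk))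
  rw [algebraMap_eq, mul_assoc, Nat.add_sub_cancel_left]
  exact (natDegree_C_mul_le _ _).trans (natDegree_pow_mul_pow_le hA hD k l)

theorem coeff_aeval_homogenize (hA : A.natDegree ≤ 1) (hD : D.natDegree ≤ 1)
    (p : R[X]) (n : ℕ) :
    (MvPolynomial.aeval ![A, D] (p.homogenize n)).coeff n =
      MvPolynomial.eval ![A.coeff 1, D.coeff 1] (p.homogenize n) := by
  change _ = MvPolynomial.aeval ![A.coeff 1, D.coeff 1] (p.homogenize n)
  rw [aeval_homogenize_eq_sum, aeval_homogenize_eq_sum, finsetSum_coeff]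
  refine Finset.sum_congr rfl fun k hk ↦ ?_
  obtain ⟨l, hl⟩ := Nat.exists_eq_add_of_le (Nat.lt_succ_iff.mp (Finset.mem_range.mp hk))
  rw [hl, Nat.add_sub_cancel_left, algebraMap_eq, mul_assoc, coeff_C_mul,
    coeff_pow_mul_pow hA hD, Algebra.algebraMap_self, RingHom.id_apply, mul_assoc]

end CommSemiring

theorem aeval_homogenize_X_sub_C {R S : Type*} [CommRing R] [CommRing S] [Algebra R S]
    (e : R) (x y : S) :
    MvPolynomial.aeval ![x, y] ((X - C e).homogenize 1) = x - algebraMap R S e * y := by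
  rw [aeval_homogenize_eq_sum]
  simp [Finset.sum_range_succ]
  ring

theorem aeval_homogenize_X_sub_C_div {K : Type*} [Field K] {a c : K} (b d : K) (hc : c ≠ 0) :
    MvPolynomial.aeval ![C a * X + C b, C c * X + C d] ((X - C (a / c)).homogenize 1) =
      C ((b * c - a * d) / c) := by
  have hC : C a = C (a / c) * C c := by rw [← C_mul, div_mul_cancel₀ a hc]
  rw [aeval_homogenize_X_sub_C, algebraMap_eq, sub_div, mul_div_cancel_right₀ b hc,
    mul_div_right_comm, C_sub, C_mul, hC]
  ring

theorem natDegree_aeval_homogenize {K : Type*} [Semifield K] {A D : K[X]}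
    (hA : A.natDegree ≤ 1) (hD : D.natDegree ≤ 1) (hD₁ : D.coeff 1 ≠ 0) {p : K[X]} {n : ℕ}
    (hp : p.natDegree ≤ n) (hroot : p.eval (A.coeff 1 / D.coeff 1) ≠ 0) :
    (MvPolynomial.aeval ![A, D] (p.homogenize n)).natDegree = n := by
  refine le_antisymm (natDegree_aeval_homogenize_le hA hD p n) (le_natDegree_of_ne_zero ?_)
  rw [coeff_aeval_homogenize hA hD, eval_homogenize hp _ hD₁]
  exact mul_ne_zero (by simpa using hroot) (pow_ne_zero _ (by simpa using hD₁))

end Polynomial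

theorem stmt_3 (a b c d : ℂ) (hΔ : a * d - b * c ≠ 0) (hc : c ≠ 0)
    (p : Polynomial ℂ) (hp : p ≠ 0) (n : ℕ) (hn : n = p.natDegree)
    (m : ℕ) (hm : p.rootMultiplicity (a / c) = m)
    (q : Polynomial ℂ)
    (hq : q = ∑ k ∈ Finset.range (n + 1),
      Polynomial.C (p.coeff k) * (Polynomial.C a * X + Polynomial.C b) ^ k *
        (Polynomial.C c * X + Polynomial.C d) ^ (n - k)) :
    q.natDegree = n - m := by
  obtain ⟨r, hpr, hr⟩ := exists_eq_pow_rootMultiplicity_mul_and_not_dvd p hp (a / c)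
  rw [hm] at hpr
  rw [dvd_iff_isRoot] at hr
  have hr₀ : r ≠ 0 := by rintro rfl; exact hr (by simp)
  have hX : (X - C (a / c)).natDegree ≤ 1 := natDegree_X_sub_C_le _
  have hn' : n = m * 1 + r.natDegree := by
    rw [hn, hpr, natDegree_mul (pow_ne_zero _ (X_sub_C_ne_zero _)) hr₀]; simp
  have hu : (b * c - a * d) / c ≠ 0 :=
    div_ne_zero (sub_ne_zero.mpr (sub_ne_zero.mp hΔ).symm) hc
  have hqp : q = MvPolynomial.aeval ![C a * X + C b, C c * X + C d] (p.homogenize n) := by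
    rw [hq, aeval_homogenize_eq_sum]; rfl
  rw [hqp, hn', hpr, homogenize_mul _ _ (natDegree_pow_le_of_le m hX) le_rfl,
    homogenize_pow _ hX, map_mul, map_pow, aeval_homogenize_X_sub_C_div b d hc, ← C_pow,
    natDegree_C_mul (pow_ne_zero _ hu),
    natDegree_aeval_homogenize natDegree_linear_le natDegree_linear_le (by simpa using hc) le_rfl
      (by simpa using hr)]
  omega
end

section
/- Let w be a differentiable positive function on an interval satisfying w'(x)/w(x) = (g(x) - f'(x))/f(x) wherever f(x) ≠ 0. Let M(x) = (ax+b)/(cx+d), Δ = ad - bc ≠ 0, and define ω(x) = w(M(x)) M'(x) = Δ w(M(x))/(cx+d)^2. Then ω satisfies ω'(x)/ω(x) = (G(x) - F'(x))/F(x), where F(x) = ((cx+d)^4/Δ^2) f(M(x)) and G(x) = (2c(cx+d)^3/Δ^2) f(M(x)) + ((cx+d)^2/Δ) g(M(x)), at points where all quantities are defined and nonzero. -/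
open Polynomial

/-!
In product form the Pearson equation reads `(w f)' = w g`. Under `M` the product transforms as
`ω F = (c x + d)² / Δ · (w f) ∘ M`, and differentiating the right side with `M' = Δ / (c x + d)²`
gives exactly `ω G`. Dividing `ω' F + ω F' = ω G` by `ω F` returns the logarithmic form.
-/

theorem div_eq_sub_div_iff_mul_add_mul_eq {K : Type*} [Field K] {w w' f f' g : K}
    (hw : w ≠ 0) (hf : f ≠ 0) : w' / w = (g - f') / f ↔ w' * f + w * f' = w * g := by
  rw [div_eq_div_iff hw hf]
  constructor <;> intro h <;> linear_combination h

section Mobius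

variable {𝕜 : Type*} [NontriviallyNormedField 𝕜] {a b c d x : 𝕜}

theorem hasDerivAt_mobius (hx : c * x + d ≠ 0) :
    HasDerivAt (fun y => (a * y + b) / (c * y + d)) ((a * d - b * c) / (c * x + d) ^ 2) x := by
  have hnum : HasDerivAt (fun y => a * y + b) a x := by
    simpa using ((hasDerivAt_id x).const_mul a).add_const b
  have hden : HasDerivAt (fun y => c * y + d) c x := by
    simpa using ((hasDerivAt_id x).const_mul c).add_const d
  exact (hnum.div hden hx).congr_deriv (by ring)

theorem hasDerivAt_mobius_pearson {w f g : 𝕜 → 𝕜} (hx : c * x + d ≠ 0)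
    (hwf : HasDerivAt (fun y => w y * f y)
      (w ((a * x + b) / (c * x + d)) * g ((a * x + b) / (c * x + d)))
      ((a * x + b) / (c * x + d))) :
    HasDerivAt (fun y => (c * y + d) ^ 2 / (a * d - b * c) *
        (w ((a * y + b) / (c * y + d)) * f ((a * y + b) / (c * y + d))))
      ((a * d - b * c) * w ((a * x + b) / (c * x + d)) / (c * x + d) ^ 2 *
        (2 * c * (c * x + d) ^ 3 / (a * d - b * c) ^ 2 * f ((a * x + b) / (c * x + d)) +
          (c * x + d) ^ 2 / (a * d - b * c) * g ((a * x + b) / (c * x + d)))) x := by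
  have hden : HasDerivAt (fun y => c * y + d) c x := by
    simpa using ((hasDerivAt_id x).const_mul c).add_const d
  have hcomp : HasDerivAt (fun y => w ((a * y + b) / (c * y + d)) * f ((a * y + b) / (c * y + d)))
      (w ((a * x + b) / (c * x + d)) * g ((a * x + b) / (c * x + d)) *
        ((a * d - b * c) / (c * x + d) ^ 2)) x :=
    hwf.comp (h₂ := fun y => w y * f y) x (hasDerivAt_mobius hx)
  refine (((hden.fun_pow 2).div_const (a * d - b * c)).fun_mul hcomp).congr_deriv ?_
  field_simp
  ring

end Mobius

theorem stmt_14 (a b c d : ℂ) (hΔ : a * d - b * c ≠ 0)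
    (f g : Polynomial ℂ) (w : ℂ → ℂ) (hw : Differentiable ℂ w)
    (hPearson : ∀ x : ℂ, f.eval x ≠ 0 → w x ≠ 0 →
      deriv w x / w x = (g.eval x - f.derivative.eval x) / f.eval x)
    (ω F G : ℂ → ℂ)
    (hω : ∀ x, ω x = (a * d - b * c) * w ((a * x + b) / (c * x + d)) / (c * x + d) ^ 2)
    (hF : ∀ x, F x = (c * x + d) ^ 4 / (a * d - b * c) ^ 2 *
      f.eval ((a * x + b) / (c * x + d)))
    (hG : ∀ x, G x = 2 * c * (c * x + d) ^ 3 / (a * d - b * c) ^ 2 *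
        f.eval ((a * x + b) / (c * x + d)) +
      (c * x + d) ^ 2 / (a * d - b * c) * g.eval ((a * x + b) / (c * x + d))) :
    ∀ x : ℂ, c * x + d ≠ 0 → f.eval ((a * x + b) / (c * x + d)) ≠ 0 →
      w ((a * x + b) / (c * x + d)) ≠ 0 →
      deriv ω x / ω x = (G x - deriv F x) / F x := by
  intro x hx hf hwM
  have hωF : (fun y => ω y * F y) = fun y => (c * y + d) ^ 2 / (a * d - b * c) *
      (w ((a * y + b) / (c * y + d)) * f.eval ((a * y + b) / (c * y + d))) := by
    funext y
    rw [hω, hF]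
    rcases eq_or_ne (c * y + d) 0 with hy | hy
    · simp [hy]
    · field_simp
  have hωd : DifferentiableAt ℂ ω x := by
    rw [funext hω]
    have hM := (hasDerivAt_mobius (a := a) (b := b) hx).differentiableAt
    fun_prop (disch := exact pow_ne_zero 2 hx)
  have hFd : DifferentiableAt ℂ F x := by
    rw [funext hF]
    have hM := (hasDerivAt_mobius (a := a) (b := b) hx).differentiableAt
    fun_prop
  have hwf := (hw _).hasDerivAt.fun_mul (f.hasDerivAt ((a * x + b) / (c * x + d)))
  rw [(div_eq_sub_div_iff_mul_add_mul_eq hwM hf).1 (hPearson _ hf hwM)] at hwf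
  have hprod := hωd.hasDerivAt.fun_mul hFd.hasDerivAt
  rw [hωF] at hprod
  have hωFG := hprod.unique
    (hasDerivAt_mobius_pearson (f := fun y => f.eval y) (g := fun y => g.eval y) hx hwf)
  rw [← hω, ← hG] at hωFG
  refine (div_eq_sub_div_iff_mul_add_mul_eq ?_ ?_).2 hωFG
  · rw [hω]; exact div_ne_zero (mul_ne_zero hΔ hwM) (pow_ne_zero 2 hx)
  · rw [hF]; exact mul_ne_zero (div_ne_zero (pow_ne_zero 4 hx) (pow_ne_zero 2 hΔ)) hf
end

section
/- For real γ > -1 and real δ, the polynomial R_n^{(γ,δ)}(x) := (-i)^n J_n^{(γ+iδ, γ-iδ)}(ix) (Jacobi polynomial with complex conjugate parameters evaluated at ix) has real coefficients for every nonnegative integer n. -/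
open Finset Complex

/-- Pochhammer symbol `(z)_k = z (z+1) ⋯ (z+k-1)` for a complex number. -/
noncomputable def poch (z : ℂ) (k : ℕ) : ℂ := ∏ j ∈ Finset.range k, (z + j)

/-- The Jacobi polynomial `J_n^{(α,β)}(x)` for complex parameters, via the
terminating hypergeometric formula
`J_n^{(α,β)}(x) = ((α+1)_n/n!) ₂F₁(-n, n+α+β+1; α+1; (1-x)/2)`. -/
noncomputable def jacobiC (α β : ℂ) (n : ℕ) (x : ℂ) : ℂ :=
  (poch (α + 1) n / n.factorial) *
    ∑ k ∈ Finset.range (n + 1),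
      poch (-(n : ℂ)) k * poch ((n : ℂ) + α + β + 1) k /
        (poch (α + 1) k * k.factorial) * ((1 - x) / 2) ^ k

noncomputable def fallC (z : ℂ) (k : ℕ) : ℂ := ∏ j ∈ Finset.range k, (z - j)

lemma poch_succ (z : ℂ) (k : ℕ) : poch z (k + 1) = poch z k * (z + k) :=
  Finset.prod_range_succ _ _

lemma fallC_succ (z : ℂ) (k : ℕ) : fallC z (k + 1) = fallC z k * (z - k) :=
  Finset.prod_range_succ _ _

lemma poch_add (z : ℂ) (a b : ℕ) : poch z (a + b) = poch z a * poch (z + a) b := by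
  rw [poch, poch, poch, Finset.prod_range_add]
  congr 1
  refine Finset.prod_congr rfl fun j _ => ?_
  push_cast; ring

lemma poch_eq_fallC (z : ℂ) (k : ℕ) : poch z k = fallC (z + k - 1) k := by
  rw [poch, fallC, ← Finset.prod_range_reflect]
  refine Finset.prod_congr rfl fun j hj => ?_
  rw [Finset.mem_range] at hj
  have h1 : (k - 1 - j : ℕ) = k - (1 + j) := by omega
  rw [h1, Nat.cast_sub (by omega)]
  push_cast; ring

lemma fallC_nat (n k : ℕ) (h : k ≤ n) : fallC (n : ℂ) k = (n.descFactorial k : ℂ) := by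
  rw [fallC, Nat.descFactorial_eq_prod_range, Nat.cast_prod]
  refine Finset.prod_congr rfl fun j hj => ?_
  rw [Finset.mem_range] at hj
  rw [Nat.cast_sub (by omega)]

lemma fallC_nat_factorial (n k : ℕ) (h : k ≤ n) :
    fallC (n : ℂ) k * ((n - k).factorial : ℂ) = (n.factorial : ℂ) := by
  rw [fallC_nat n k h, ← Nat.cast_mul, mul_comm, Nat.factorial_mul_descFactorial h]

lemma poch_neg_nat (n k : ℕ) : poch (-(n : ℂ)) k = (-1) ^ k * fallC (n : ℂ) k := by
  induction k with
  | zero => simp [poch, fallC]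
  | succ k ih => rw [poch_succ, fallC_succ, ih]; ring

lemma fallC_vandermonde (x y : ℂ) (t : ℕ) :
    ∑ u ∈ Finset.range (t + 1), (t.choose u : ℂ) * fallC x u * fallC y (t - u)
      = fallC (x + y) t := by
  induction t with
  | zero => simp [fallC]
  | succ t ih =>
    have hA : ∑ u ∈ Finset.range (t + 2), (t.choose u : ℂ) *
        fallC x u * fallC y (t + 1 - u)
        = ∑ u ∈ Finset.range (t + 1), (t.choose u : ℂ) * fallC x u * fallC y (t + 1 - u) := by
      rw [Finset.sum_range_succ]
      simp [Nat.choose_succ_self]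
    have hsplit : ∑ u ∈ Finset.range (t + 2), ((t + 1).choose u : ℂ) *
        fallC x u * fallC y (t + 1 - u)
        = (∑ u ∈ Finset.range (t + 1), (t.choose u : ℂ) * fallC x u * fallC y (t + 1 - u))
          + ∑ u ∈ Finset.range (t + 1), (t.choose u : ℂ) * fallC x (u + 1) * fallC y (t - u) := by
      rw [Finset.sum_range_succ' (fun u => ((t + 1).choose u : ℂ) * fallC x u * fallC y (t + 1 - u)) (t+1)]
      rw [← hA, Finset.sum_range_succ' (fun u => ((t).choose u : ℂ) * fallC x u * fallC y (t + 1 - u)) (t+1)]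
      simp only [Nat.choose_succ_succ, Nat.cast_add, Nat.succ_sub_succ_eq_sub, add_mul,
        Finset.sum_add_distrib, Nat.choose_zero_right]
      ring
    rw [hsplit, fallC_succ, ← ih, Finset.sum_mul, ← Finset.sum_add_distrib]
    refine Finset.sum_congr rfl fun u hu => ?_
    rw [Finset.mem_range] at hu
    rw [show t + 1 - u = (t - u) + 1 from by omega, fallC_succ, fallC_succ,
      Nat.cast_sub (by omega : u ≤ t)]
    ring

lemma poch_vandermonde (α β : ℂ) (n k : ℕ) (hk : k ≤ n) :
    ∑ u ∈ Finset.range (k + 1),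
        (k.choose u : ℂ) * poch (β + ((n - u : ℕ) : ℂ) + 1) u * poch (α + u + 1) (k - u)
      = poch ((n : ℂ) + α + β + 1) k := by
  rw [poch_eq_fallC, show (n : ℂ) + α + β + 1 + k - 1 = (β + n) + (α + k) from by ring,
    ← fallC_vandermonde]
  refine Finset.sum_congr rfl fun u hu => ?_
  rw [Finset.mem_range] at hu
  have hu' : u ≤ k := by omega
  rw [poch_eq_fallC, poch_eq_fallC,
    show β + ((n - u : ℕ) : ℂ) + 1 + u - 1 = β + n from by
      rw [Nat.cast_sub (le_trans hu' hk)]; ring,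
    show α + (u : ℂ) + 1 + ((k - u : ℕ) : ℂ) - 1 = α + k from by
      rw [Nat.cast_sub hu']; ring]

lemma key_term (α β : ℂ) (n k u : ℕ) (hk : k ≤ n) (hu : u ≤ k) :
    poch (α + (u : ℂ) + 1) (n - u) * poch (β + ((n - u : ℕ) : ℂ) + 1) u /
        ((u.factorial : ℂ) * ((n - u).factorial : ℂ)) * ((n - u).choose (k - u) : ℂ)
      = poch (α + (k : ℂ) + 1) (n - k) *
          ((k.choose u : ℂ) * poch (β + ((n - u : ℕ) : ℂ) + 1) u * poch (α + (u : ℂ) + 1) (k - u)) /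
          (((n - k).factorial : ℂ) * (k.factorial : ℂ)) := by
  have e1 : poch (α + (u : ℂ) + 1) (n - u)
      = poch (α + (u : ℂ) + 1) (k - u) * poch (α + (k : ℂ) + 1) (n - k) := by
    have h := poch_add (α + (u : ℂ) + 1) (k - u) (n - k)
    rw [show (k - u) + (n - k) = n - u from by omega] at h
    rw [h, show α + (u : ℂ) + 1 + ((k - u : ℕ) : ℂ) = α + (k : ℂ) + 1 from by
      rw [Nat.cast_sub hu]; ring]
  have e2 : ((n - u).factorial : ℂ)
      = ((n - u).choose (k - u) : ℂ) * ((k - u).factorial : ℂ) * ((n - k).factorial : ℂ) := by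
    have h := Nat.choose_mul_factorial_mul_factorial (show k - u ≤ n - u from by omega)
    rw [show (n - u) - (k - u) = n - k from by omega] at h
    exact_mod_cast h.symm
  have e3 : (k.factorial : ℂ)
      = (k.choose u : ℂ) * (u.factorial : ℂ) * ((k - u).factorial : ℂ) := by
    have h := Nat.choose_mul_factorial_mul_factorial hu
    exact_mod_cast h.symm
  have c1 : ((n - u).choose (k - u) : ℂ) ≠ 0 := by
    exact_mod_cast Nat.cast_ne_zero.mpr (Nat.choose_pos (show k - u ≤ n - u from by omega)).ne'
  have c2 : ((k - u).factorial : ℂ) ≠ 0 := Nat.cast_ne_zero.mpr (Nat.factorial_ne_zero _)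
  have c3 : ((n - k).factorial : ℂ) ≠ 0 := Nat.cast_ne_zero.mpr (Nat.factorial_ne_zero _)
  have c4 : ((u).factorial : ℂ) ≠ 0 := Nat.cast_ne_zero.mpr (Nat.factorial_ne_zero _)
  have c5 : ((k.choose u : ℕ) : ℂ) ≠ 0 := Nat.cast_ne_zero.mpr (Nat.choose_pos hu).ne'
  rw [e1, e2, e3]
  field_simp

lemma key_sum (α β : ℂ) (n k : ℕ) (hk : k ≤ n) :
    ∑ u ∈ Finset.range (k + 1),
        poch (α + (u : ℂ) + 1) (n - u) * poch (β + ((n - u : ℕ) : ℂ) + 1) u /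
          ((u.factorial : ℂ) * ((n - u).factorial : ℂ)) * ((n - u).choose (k - u) : ℂ)
      = poch (α + (k : ℂ) + 1) (n - k) * poch ((n : ℂ) + α + β + 1) k /
          (((n - k).factorial : ℂ) * (k.factorial : ℂ)) := by
  rw [← poch_vandermonde α β n k hk, Finset.mul_sum, Finset.sum_div]
  refine Finset.sum_congr rfl fun u hu => ?_
  rw [Finset.mem_range] at hu
  exact key_term α β n k u hk (by omega)


lemma jacobiC_eq_coeff (α β : ℂ) (n : ℕ) (h : ∀ k, k ≤ n → poch (α + 1) k ≠ 0) (x : ℂ) :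
    jacobiC α β n x = ∑ k ∈ Finset.range (n + 1),
      (-1) ^ k * poch (α + (k : ℂ) + 1) (n - k) * poch ((n : ℂ) + α + β + 1) k /
        (((n - k).factorial : ℂ) * (k.factorial : ℂ)) * ((1 - x) / 2) ^ k := by
  rw [jacobiC, Finset.mul_sum]
  refine Finset.sum_congr rfl fun k hk => ?_
  rw [Finset.mem_range] at hk
  have hk' : k ≤ n := by omega
  have hsplit : poch (α + 1) n = poch (α + 1) k * poch (α + (k : ℂ) + 1) (n - k) := by
    have h2 := poch_add (α + 1) k (n - k)
    rw [show k + (n - k) = n from by omega] at h2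
    rw [h2, show α + 1 + (k : ℂ) = α + (k : ℂ) + 1 from by ring]
  have hfact : (n.factorial : ℂ) = fallC (n : ℂ) k * ((n - k).factorial : ℂ) :=
    (fallC_nat_factorial n k hk').symm
  have hfall0 : fallC (n : ℂ) k ≠ 0 := by
    rw [fallC_nat n k hk']
    exact Nat.cast_ne_zero.mpr (by simp [Nat.descFactorial_eq_zero_iff_lt]; omega)
  have h0 := h k hk'
  have hf1 : ((k.factorial : ℕ) : ℂ) ≠ 0 := Nat.cast_ne_zero.mpr (Nat.factorial_ne_zero _)
  have hf2 : (((n - k).factorial : ℕ) : ℂ) ≠ 0 := Nat.cast_ne_zero.mpr (Nat.factorial_ne_zero _)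
  rw [hsplit, poch_neg_nat, hfact]
  field_simp

lemma jacobiC_symm_form (α β : ℂ) (n : ℕ) (h : ∀ k, k ≤ n → poch (α + 1) k ≠ 0) (x : ℂ) :
    jacobiC α β n x = ∑ u ∈ Finset.range (n + 1),
      poch (α + (u : ℂ) + 1) (n - u) * poch (β + ((n - u : ℕ) : ℂ) + 1) u /
        ((u.factorial : ℂ) * ((n - u).factorial : ℂ)) *
        ((x - 1) / 2) ^ u * ((x + 1) / 2) ^ (n - u) := by
  rw [jacobiC_eq_coeff α β n h x]
  set z : ℂ := (1 - x) / 2 with hz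
  have hx1 : (x - 1) / 2 = -z := by rw [hz]; ring
  have hx2 : (x + 1) / 2 = 1 - z := by rw [hz]; ring
  rw [hx1, hx2]
  have step1 : ∀ u ∈ Finset.range (n + 1),
      poch (α + (u : ℂ) + 1) (n - u) * poch (β + ((n - u : ℕ) : ℂ) + 1) u /
        ((u.factorial : ℂ) * ((n - u).factorial : ℂ)) * (-z) ^ u * (1 - z) ^ (n - u)
      = ∑ k ∈ Finset.range (n + 1), (if u ≤ k then
          poch (α + (u : ℂ) + 1) (n - u) * poch (β + ((n - u : ℕ) : ℂ) + 1) u /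
            ((u.factorial : ℂ) * ((n - u).factorial : ℂ)) * ((n - u).choose (k - u) : ℂ)
            * (-z) ^ k else 0) := by
    intro u hu
    rw [Finset.mem_range] at hu
    have hu' : u ≤ n := by omega
    set c : ℂ := poch (α + (u : ℂ) + 1) (n - u) * poch (β + ((n - u : ℕ) : ℂ) + 1) u /
        ((u.factorial : ℂ) * ((n - u).factorial : ℂ)) with hc
    rw [show (1 : ℂ) - z = -z + 1 from by ring, add_pow]
    rw [Finset.mul_sum, ← Finset.sum_filter]
    have hfil : (Finset.range (n + 1)).filter (fun k => u ≤ k) = Finset.Ico u (n + 1) := by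
      ext a; simp [Finset.mem_Ico]; omega
    rw [hfil, Finset.sum_Ico_eq_sum_range]
    rw [show n + 1 - u = n - u + 1 from by omega]
    refine Finset.sum_congr rfl fun j hj => ?_
    rw [Finset.mem_range] at hj
    simp only [one_pow, mul_one]
    rw [show u + j - u = j from by omega, pow_add]
    ring
  rw [Finset.sum_congr rfl step1, Finset.sum_comm]
  refine Finset.sum_congr rfl fun k hk => ?_
  rw [Finset.mem_range] at hk
  have hk' : k ≤ n := by omega
  rw [← Finset.sum_filter]
  have hfil2 : (Finset.range (n + 1)).filter (fun u => u ≤ k) = Finset.range (k + 1) := by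
    ext a; simp; omega
  rw [hfil2, ← Finset.sum_mul, key_sum α β n k hk',
    show ((-z) : ℂ) ^ k = (-1) ^ k * z ^ k from by rw [neg_pow]]
  ring

lemma poch_conj (z : ℂ) (k : ℕ) :
    (starRingEnd ℂ) (poch z k) = poch ((starRingEnd ℂ) z) k := by
  rw [poch, poch, map_prod]
  exact Finset.prod_congr rfl fun j _ => by simp

theorem stmt_19 (γ δ : ℝ) (hγ : -1 < γ) (n : ℕ) :
    ∀ x : ℝ,
      ((-I) ^ n * jacobiC (γ + I * δ) (γ - I * δ) n (I * x)).im = 0 := by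
  intro x
  set α : ℂ := (γ : ℂ) + I * δ with hα
  set β : ℂ := (γ : ℂ) - I * δ with hβ
  have hca : (starRingEnd ℂ) α = β := by
    rw [hα, hβ]; simp [Complex.conj_ofReal]; try ring
  have hcb : (starRingEnd ℂ) β = α := by
    rw [hα, hβ]; simp [Complex.conj_ofReal]; try ring
  have h : ∀ k, k ≤ n → poch (α + 1) k ≠ 0 := by
    intro k _
    rw [poch]
    refine Finset.prod_ne_zero_iff.mpr fun j _ => fun hzero => ?_
    have hre := congrArg Complex.re hzero
    simp [hα, Complex.add_re, Complex.mul_re] at hre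
    have hj : (0 : ℝ) ≤ (j : ℝ) := Nat.cast_nonneg j
    linarith
  rw [← Complex.conj_eq_iff_im]
  rw [jacobiC_symm_form α β n h ((I : ℂ) * x)]
  set T : ℕ → ℂ := fun u =>
    poch (α + (u : ℂ) + 1) (n - u) * poch (β + ((n - u : ℕ) : ℂ) + 1) u /
      ((u.factorial : ℂ) * ((n - u).factorial : ℂ)) *
      ((I * x - 1) / 2) ^ u * ((I * x + 1) / 2) ^ (n - u) with hT
  have hterm : ∀ u ∈ Finset.range (n + 1), (starRingEnd ℂ) (T u) = (-1) ^ n * T (n - u) := by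
    intro u hu
    rw [Finset.mem_range] at hu
    have hu' : u ≤ n := by omega
    rw [hT]
    simp only [map_mul, map_div₀, map_pow, map_sub, map_add, map_one, map_ofNat,
      Complex.conj_I, Complex.conj_ofReal, Complex.conj_natCast, poch_conj, hca, hcb]
    rw [show n - (n - u) = u from by omega]
    rw [show (-I * (x : ℂ) - 1) / 2 = -(((I : ℂ) * x + 1) / 2) from by ring,
        show (-I * (x : ℂ) + 1) / 2 = -(((I : ℂ) * x - 1) / 2) from by ring,
        show (-(((I : ℂ) * x + 1) / 2)) ^ u = (-1) ^ u * (((I : ℂ) * x + 1) / 2) ^ u from by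
          rw [neg_pow],
        show (-(((I : ℂ) * x - 1) / 2)) ^ (n - u)
            = (-1) ^ (n - u) * (((I : ℂ) * x - 1) / 2) ^ (n - u) from by rw [neg_pow],
        show ((-1 : ℂ)) ^ n = (-1) ^ u * (-1) ^ (n - u) from by
          rw [← pow_add, show u + (n - u) = n from by omega]]
    ring
  rw [map_mul, map_pow, map_sum, Finset.sum_congr rfl hterm, ← Finset.mul_sum]
  have hrefl : ∑ u ∈ Finset.range (n + 1), T (n - u) = ∑ u ∈ Finset.range (n + 1), T u := by
    have h2 := Finset.sum_range_reflect T (n + 1)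
    simpa using h2
  rw [hrefl]
  rw [show (starRingEnd ℂ) (-I) = I from by simp]
  rw [show (I : ℂ) ^ n * ((-1) ^ n * ∑ u ∈ Finset.range (n + 1), T u)
      = ((I : ℂ) * (-1)) ^ n * ∑ u ∈ Finset.range (n + 1), T u from by
    rw [mul_pow]; ring]
  norm_num
end
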